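/- Let Z₁ ⊂ Z ⊂ Z₋₁ be a Hilbert rigging and v : ℝ × Z₁ → Z (valued in Z) a vector field satisfying, pointwise in t, the local Lipschitz-type estimate ‖v(t, x) − v(t, y)‖_Z ≤ C(M)(‖x‖²_{Z₁} + ‖y‖²_{Z₁})‖x − y‖_Z for all x, y in the unit ball of Z with x, y ∈ Z₁. Then any two weak solutions γ₁, γ₂ ∈ L²(Ī, Z₁) ∩ L^∞(Ī, Z) ∩ W^{1,∞}(Ī, Z₋₁) of the initial value problem γ'(t) = v(t, γ(t)), γ(0) = x₀, whose values stay in the closed unit ball of Z, coincide on Ī. -/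

import Mathlib

open MeasureTheory Set

lemma gronwall_zero {b : ℝ} (hb : 0 ≤ b) {f g : ℝ → ℝ}
    (hf : ContinuousOn f (Set.Icc 0 b))
    (hf0 : ∀ s ∈ Set.Icc 0 b, 0 ≤ f s)
    (hg : IntegrableOn g (Set.Icc 0 b))
    (hg0 : ∀ s ∈ Set.Icc 0 b, 0 ≤ g s)
    (hgf : IntegrableOn (fun s => g s * f s) (Set.Icc 0 b))
    (hle : ∀ t ∈ Set.Icc 0 b, f t ≤ ∫ s in (0:ℝ)..t, g s * f s) :
    ∀ t ∈ Set.Icc 0 b, f t = 0 := by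
  -- interval integrability of g*f on subintervals
  have hii : ∀ t1 t2 : ℝ, 0 ≤ t1 → t1 ≤ t2 → t2 ≤ b →
      IntervalIntegrable (fun s => g s * f s) volume t1 t2 := by
    intro t1 t2 h1 h12 h2
    have hsub : Set.uIcc t1 t2 ⊆ Set.Icc 0 b := by
      rw [Set.uIcc_of_le h12]; exact Set.Icc_subset_Icc h1 h2
    exact (hgf.mono_set hsub).intervalIntegrable
  have hgi : ∀ t1 t2 : ℝ, 0 ≤ t1 → t1 ≤ t2 → t2 ≤ b →
      IntervalIntegrable g volume t1 t2 := by
    intro t1 t2 h1 h12 h2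
    have hsub : Set.uIcc t1 t2 ⊆ Set.Icc 0 b := by
      rw [Set.uIcc_of_le h12]; exact Set.Icc_subset_Icc h1 h2
    exact (hg.mono_set hsub).intervalIntegrable
  have hf00 : f 0 = 0 := le_antisymm (by simpa using hle 0 ⟨le_rfl, hb⟩) (hf0 0 ⟨le_rfl, hb⟩)
  set S : Set ℝ := {t | t ∈ Set.Icc 0 b ∧ ∀ s ∈ Set.Icc 0 t, f s = 0} with hS
  have h0S : (0:ℝ) ∈ S := ⟨⟨le_rfl, hb⟩, fun s hs => by
    rw [le_antisymm hs.2 hs.1]; exact hf00⟩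
  have hbdd : BddAbove S := ⟨b, fun t ht => ht.1.2⟩
  set c := sSup S with hc
  have hc0 : 0 ≤ c := le_csSup hbdd h0S
  have hcb : c ≤ b := csSup_le ⟨0, h0S⟩ fun t ht => ht.1.2
  have key : ∀ s, 0 ≤ s → s < c → f s = 0 := by
    intro s hs0 hsc
    obtain ⟨t, htS, hst⟩ := exists_lt_of_lt_csSup ⟨0, h0S⟩ hsc
    exact htS.2 s ⟨hs0, hst.le⟩
  -- the integral up to c vanishes
  have hintc : (∫ s in (0:ℝ)..c, g s * f s) = 0 := by
    rw [intervalIntegral.integral_of_le hc0]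
    apply integral_eq_zero_of_ae
    have hne : ∀ᵐ s : ℝ ∂(volume.restrict (Set.Ioc 0 c)), s ≠ c := by
      refine ae_restrict_of_ae ?_
      have : (volume : Measure ℝ) {s : ℝ | ¬ s ≠ c} = 0 := by
        simp [Real.volume_singleton]
      exact this
    filter_upwards [hne, ae_restrict_mem measurableSet_Ioc] with s hsne hs
    have : f s = 0 := key s hs.1.le (lt_of_le_of_ne hs.2 hsne)
    simp [this]
  have hfc : f c = 0 := le_antisymm (by simpa [hintc] using hle c ⟨hc0, hcb⟩)
    (hf0 c ⟨hc0, hcb⟩)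
  have hcS : c ∈ S := ⟨⟨hc0, hcb⟩, fun s hs => by
    rcases hs.2.lt_or_eq with h | h
    · exact key s hs.1 h
    · rw [h]; exact hfc⟩
  -- show c = b
  have hceq : c = b := by
    by_contra hne
    have hclt : c < b := lt_of_le_of_ne hcb hne
    -- continuity of the primitive of g at c
    have hGcont : ContinuousOn (fun x => ∫ t in Set.Ioc c x, g t) (Set.Icc c b) :=
      intervalIntegral.continuousOn_primitive (hg.mono_set (Set.Icc_subset_Icc hc0 le_rfl))
    have hGc : (∫ t in Set.Ioc c c, g t) = 0 := by simp
    have hcwa := (hGcont c ⟨le_rfl, hcb⟩)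
    rw [Metric.continuousWithinAt_iff] at hcwa
    obtain ⟨δ, hδ0, hδ⟩ := hcwa (1/2) (by norm_num)
    set t1 := min (c + δ/2) b with ht1
    have hct1 : c < t1 := lt_min (by linarith) hclt
    have ht1b : t1 ≤ b := min_le_right _ _
    have ht10 : 0 ≤ t1 := hc0.trans hct1.le
    have hGt1 : (∫ t in Set.Ioc c t1, g t) ≤ 1/2 := by
      have := hδ ⟨hct1.le, ht1b⟩ (by
        rw [Real.dist_eq, abs_of_nonneg (by linarith)]
        have : t1 ≤ c + δ/2 := min_le_left _ _
        linarith)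
      rw [hGc, Real.dist_eq, sub_zero] at this
      exact (le_abs_self _).trans this.le
    -- maximum of f on [c, t1]
    have hsub : Set.Icc c t1 ⊆ Set.Icc 0 b := Set.Icc_subset_Icc hc0 ht1b
    obtain ⟨x0, hx0, hmax⟩ := isCompact_Icc.exists_isMaxOn ⟨c, le_rfl, hct1.le⟩
      (hf.mono hsub)
    set M := f x0 with hM
    have hM0 : 0 ≤ M := hf0 x0 (hsub hx0)
    have hbound : ∀ t ∈ Set.Icc c t1, f t ≤ 1/2 * M := by
      intro t ht
      have htb : t ≤ b := ht.2.trans ht1b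
      have ht0 : 0 ≤ t := hc0.trans ht.1
      have hsplit : (∫ s in (0:ℝ)..t, g s * f s)
          = ∫ s in c..t, g s * f s := by
        rw [← intervalIntegral.integral_add_adjacent_intervals
          (hii 0 c le_rfl hc0 hcb) (hii c t hc0 ht.1 htb), hintc, zero_add]
      have h1 : f t ≤ ∫ s in c..t, g s * f s := by
        rw [← hsplit]; exact hle t ⟨ht0, htb⟩
      have h2 : (∫ s in c..t, g s * f s) ≤ ∫ s in c..t, g s * M := by
        apply intervalIntegral.integral_mono_on ht.1 (hii c t hc0 ht.1 htb)
          ((hgi c t hc0 ht.1 htb).mul_const M)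
        intro s hs
        have hs' : s ∈ Set.Icc 0 b := ⟨hc0.trans hs.1, hs.2.trans htb⟩
        exact mul_le_mul_of_nonneg_left (hmax ⟨hs.1, hs.2.trans ht.2⟩) (hg0 s hs')
      have h3 : (∫ s in c..t, g s * M) = (∫ s in c..t, g s) * M := by
        rw [← intervalIntegral.integral_mul_const]
      have h4 : (∫ s in c..t, g s) ≤ 1/2 := by
        have hmono : (∫ s in c..t, g s) ≤ ∫ s in c..t1, g s := by
          apply intervalIntegral.integral_mono_interval le_rfl ht.1 ht.2
          · filter_upwards [ae_restrict_mem measurableSet_Ioc] with s hs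
            exact hg0 s ⟨hc0.trans hs.1.le, hs.2.trans ht1b⟩
          · exact hgi c t1 hc0 hct1.le ht1b
        have : (∫ s in c..t1, g s) = ∫ t in Set.Ioc c t1, g t :=
          intervalIntegral.integral_of_le hct1.le
        rw [this] at hmono
        exact hmono.trans hGt1
      calc f t ≤ (∫ s in c..t, g s) * M := by rw [← h3]; exact h1.trans h2
        _ ≤ 1/2 * M := mul_le_mul_of_nonneg_right h4 hM0
    have hMle : M ≤ 1/2 * M := hbound x0 hx0
    have hMzero : M = 0 := le_antisymm (by linarith) hM0
    have ht1S : t1 ∈ S := by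
      refine ⟨⟨ht10, ht1b⟩, fun s hs => ?_⟩
      rcases le_or_gt s c with h | h
      · exact hcS.2 s ⟨hs.1, h⟩
      · exact le_antisymm (hMzero ▸ hbound s ⟨h.le, hs.2⟩ |>.trans (by simp [hMzero]))
          (hf0 s ⟨hs.1, hs.2.trans ht1b⟩)
    exact absurd (le_csSup hbdd ht1S) (not_le.mpr hct1)
  intro t ht
  exact hcS.2 t (hceq ▸ ht)

/-- Uniqueness of weak solutions staying in the unit ball of `Z`, for a
vector field `v : ℝ × Z₁ → Z` satisfying the local Lipschitz-type estimate
`‖v(t,x) − v(t,y)‖_Z ≤ C(1)(‖x‖²_{Z₁} + ‖y‖²_{Z₁})‖x − y‖_Z` on the unit ball of `Z`.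
Two weak solutions `γ₁, γ₂ ∈ L²(Ī,Z₁) ∩ L^∞(Ī,Z) ∩ W^{1,∞}(Ī,Z₋₁)` of
`γ' = v(t,γ), γ(0) = x₀` whose values stay in the closed unit ball of `Z` coincide. -/
theorem stmt4 {Z1 Z : Type*}
    [NormedAddCommGroup Z1] [NormedSpace ℝ Z1]
    [NormedAddCommGroup Z] [NormedSpace ℝ Z] [CompleteSpace Z]
    (j1 : Z1 →L[ℝ] Z) (hj1inj : Function.Injective j1)
    (a b : ℝ) (ha : a ≤ 0) (hb : 0 ≤ b)
    (v : ℝ → Z1 → Z) (C : ℝ → ℝ) (hC : ∀ M, 0 < C M)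
    (hlip : ∀ (t : ℝ) (x y : Z1), ‖j1 x‖ ≤ 1 → ‖j1 y‖ ≤ 1 →
      ‖v t x - v t y‖ ≤ C 1 * (‖x‖ ^ 2 + ‖y‖ ^ 2) * ‖j1 x - j1 y‖)
    (γ1 γ2 : ℝ → Z1) (x0 : Z)
    -- γᵢ ∈ L²(Ī, Z₁)
    (hL2a : IntegrableOn (fun s => ‖γ1 s‖ ^ 2) (Set.Icc a b))
    (hL2b : IntegrableOn (fun s => ‖γ2 s‖ ^ 2) (Set.Icc a b))
    -- values in the closed unit ball of Z
    (hball1 : ∀ t ∈ Set.Icc a b, ‖j1 (γ1 t)‖ ≤ 1)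
    (hball2 : ∀ t ∈ Set.Icc a b, ‖j1 (γ2 t)‖ ≤ 1)
    -- the integral (weak) form of the equation with the same initial datum x₀
    (hI1 : IntegrableOn (fun s => v s (γ1 s)) (Set.Icc a b))
    (hI2 : IntegrableOn (fun s => v s (γ2 s)) (Set.Icc a b))
    (heq1 : ∀ t ∈ Set.Icc a b, j1 (γ1 t) = x0 + ∫ s in (0:ℝ)..t, v s (γ1 s))
    (heq2 : ∀ t ∈ Set.Icc a b, j1 (γ2 t) = x0 + ∫ s in (0:ℝ)..t, v s (γ2 s)) :
    ∀ t ∈ Set.Icc a b, γ1 t = γ2 t := by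
  have hab : a ≤ b := ha.trans hb
  have h0ab : (0:ℝ) ∈ Set.Icc a b := ⟨ha, hb⟩
  set Δ : ℝ → Z := fun s => v s (γ1 s) - v s (γ2 s) with hΔ
  have hIΔ : IntegrableOn Δ (Set.Icc a b) := hI1.sub hI2
  have hsubI : ∀ t ∈ Set.Icc a b, Set.uIcc (0:ℝ) t ⊆ Set.Icc a b := by
    intro t ht x hx
    rcases Set.mem_uIcc.mp hx with h | h
    · exact ⟨ha.trans h.1, h.2.trans ht.2⟩
    · exact ⟨ht.1.trans h.1, h.2.trans hb⟩
  have hiiΔ : ∀ t ∈ Set.Icc a b, IntervalIntegrable Δ volume 0 t := fun t ht =>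
    (hIΔ.mono_set (hsubI t ht)).intervalIntegrable
  have hii1 : ∀ t ∈ Set.Icc a b, IntervalIntegrable (fun s => v s (γ1 s)) volume 0 t :=
    fun t ht => (hI1.mono_set (hsubI t ht)).intervalIntegrable
  have hii2 : ∀ t ∈ Set.Icc a b, IntervalIntegrable (fun s => v s (γ2 s)) volume 0 t :=
    fun t ht => (hI2.mono_set (hsubI t ht)).intervalIntegrable
  -- the difference is the primitive of Δ
  have hkey : ∀ t ∈ Set.Icc a b, j1 (γ1 t) - j1 (γ2 t) = ∫ s in (0:ℝ)..t, Δ s := by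
    intro t ht
    simp only [hΔ]
    rw [heq1 t ht, heq2 t ht,
      intervalIntegral.integral_sub (hii1 t ht) (hii2 t ht)]
    abel
  set f : ℝ → ℝ := fun t => ‖j1 (γ1 t) - j1 (γ2 t)‖ with hf
  set g : ℝ → ℝ := fun s => C 1 * (‖γ1 s‖ ^ 2 + ‖γ2 s‖ ^ 2) with hgdef
  have hfeq : ∀ t ∈ Set.Icc a b, f t = ‖∫ s in (0:ℝ)..t, Δ s‖ := by
    intro t ht
    simp only [hf]
    rw [hkey t ht]
  have hfcont : ContinuousOn f (Set.Icc a b) := by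
    have hΔII : IntervalIntegrable Δ volume a b :=
      (intervalIntegrable_iff_integrableOn_Icc_of_le hab).mpr hIΔ
    have h1 : ContinuousOn (fun t => ∫ s in (0:ℝ)..t, Δ s) (Set.Icc a b) := by
      have h0' : (0:ℝ) ∈ Set.uIcc a b := by rw [Set.uIcc_of_le hab]; exact h0ab
      have := intervalIntegral.continuousOn_primitive_interval' hΔII h0'
      rwa [Set.uIcc_of_le hab] at this
    exact (h1.norm).congr hfeq
  have hf0 : ∀ s ∈ Set.Icc a b, 0 ≤ f s := fun s _ => norm_nonneg _
  have hfbd : ∀ s ∈ Set.Icc a b, f s ≤ 2 := by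
    intro s hs
    calc f s ≤ ‖j1 (γ1 s)‖ + ‖j1 (γ2 s)‖ := norm_sub_le _ _
      _ ≤ 2 := by linarith [hball1 s hs, hball2 s hs]
  have hgint : IntegrableOn g (Set.Icc a b) := (hL2a.add hL2b).const_mul _
  have hg0 : ∀ s ∈ Set.Icc a b, 0 ≤ g s := fun s _ =>
    mul_nonneg (hC 1).le (by positivity)
  have hfmeas : AEStronglyMeasurable f (volume.restrict (Set.Icc a b)) :=
    hfcont.aestronglyMeasurable measurableSet_Icc
  have hfbdae : ∀ᵐ s ∂(volume.restrict (Set.Icc a b)), ‖f s‖ ≤ 2 := by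
    filter_upwards [ae_restrict_mem measurableSet_Icc] with s hs
    rw [Real.norm_eq_abs, abs_of_nonneg (hf0 s hs)]
    exact hfbd s hs
  have hgf : IntegrableOn (fun s => g s * f s) (Set.Icc a b) := by
    have h1 : Integrable (fun s => f s * g s) (volume.restrict (Set.Icc a b)) :=
      MeasureTheory.Integrable.bdd_mul hgint hfmeas hfbdae
    have h2 : (fun s => g s * f s) = fun s => f s * g s := by
      funext s; ring
    rw [IntegrableOn, h2]
    exact h1
  have hptwise : ∀ s ∈ Set.Icc a b, ‖Δ s‖ ≤ g s * f s := by
    intro s hs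
    have := hlip s (γ1 s) (γ2 s) (hball1 s hs) (hball2 s hs)
    simpa [hΔ, hgdef, hf] using this
  have hgfint : ∀ t ∈ Set.Icc a b, IntervalIntegrable (fun s => g s * f s) volume 0 t :=
    fun t ht => (hgf.mono_set (hsubI t ht)).intervalIntegrable
  -- right side
  have hright : ∀ t ∈ Set.Icc 0 b, f t = 0 := by
    apply gronwall_zero hb
    · exact hfcont.mono (Set.Icc_subset_Icc ha le_rfl)
    · exact fun s hs => hf0 s ⟨ha.trans hs.1, hs.2⟩
    · exact hgint.mono_set (Set.Icc_subset_Icc ha le_rfl)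
    · exact fun s hs => hg0 s ⟨ha.trans hs.1, hs.2⟩
    · exact hgf.mono_set (Set.Icc_subset_Icc ha le_rfl)
    · intro t ht
      have htab : t ∈ Set.Icc a b := ⟨ha.trans ht.1, ht.2⟩
      calc f t = ‖∫ s in (0:ℝ)..t, Δ s‖ := hfeq t htab
        _ ≤ ∫ s in (0:ℝ)..t, ‖Δ s‖ := intervalIntegral.norm_integral_le_integral_norm ht.1
        _ ≤ ∫ s in (0:ℝ)..t, g s * f s := by
            apply intervalIntegral.integral_mono_on ht.1 (hiiΔ t htab).norm (hgfint t htab)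
            intro s hs
            exact hptwise s ⟨ha.trans hs.1, hs.2.trans ht.2⟩
  -- left side, by reflection
  have hnega : (0:ℝ) ≤ -a := neg_nonneg.mpr ha
  have hleft : ∀ t ∈ Set.Icc 0 (-a), f (-t) = 0 := by
    have hmem : ∀ t ∈ Set.Icc (0:ℝ) (-a), -t ∈ Set.Icc a b := by
      intro t ht
      constructor
      · linarith [ht.2]
      · linarith [ht.1, hb]
    apply gronwall_zero hnega
    · exact hfcont.comp continuousOn_neg fun t ht => hmem t ht
    · exact fun s hs => hf0 _ (hmem s hs)
    · have hgii : IntervalIntegrable g volume a 0 :=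
        (intervalIntegrable_iff_integrableOn_Icc_of_le ha).mpr
          (hgint.mono_set (Set.Icc_subset_Icc le_rfl hb))
      have h2 := (IntervalIntegrable.iff_comp_neg (f := g) (a := a) (b := 0)).mp hgii
      rw [neg_zero] at h2
      exact (intervalIntegrable_iff_integrableOn_Icc_of_le hnega).mp h2.symm
    · exact fun s hs => hg0 _ (hmem s hs)
    · have hgfii : IntervalIntegrable (fun s => g s * f s) volume a 0 :=
        (intervalIntegrable_iff_integrableOn_Icc_of_le ha).mpr
          (hgf.mono_set (Set.Icc_subset_Icc le_rfl hb))
      have h2 := (IntervalIntegrable.iff_comp_neg (f := fun s => g s * f s) (a := a) (b := 0)).mp hgfii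
      rw [neg_zero] at h2
      exact (intervalIntegrable_iff_integrableOn_Icc_of_le hnega).mp h2.symm
    · intro t ht
      have htab := hmem t ht
      have hnt0 : -t ≤ (0:ℝ) := by linarith [ht.1]
      have hsub' : Set.uIcc (-t) (0:ℝ) ⊆ Set.Icc a b := by
        rw [Set.uIcc_of_le hnt0]
        exact Set.Icc_subset_Icc htab.1 hb
      calc f (-t) = ‖∫ s in (0:ℝ)..(-t), Δ s‖ := hfeq _ htab
        _ = ‖∫ s in (-t)..(0:ℝ), Δ s‖ := by
            rw [intervalIntegral.integral_symm, norm_neg]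
        _ ≤ ∫ s in (-t)..(0:ℝ), ‖Δ s‖ :=
            intervalIntegral.norm_integral_le_integral_norm hnt0
        _ ≤ ∫ s in (-t)..(0:ℝ), g s * f s := by
            apply intervalIntegral.integral_mono_on hnt0
              ((hIΔ.mono_set hsub').intervalIntegrable).norm
              ((hgf.mono_set hsub').intervalIntegrable)
            intro s hs
            exact hptwise s ⟨htab.1.trans hs.1, hs.2.trans hb⟩
        _ = ∫ s in (0:ℝ)..t, g (-s) * f (-s) := by
            rw [intervalIntegral.integral_comp_neg (fun s => g s * f s)]
            rw [neg_zero]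
  -- conclude
  intro t ht
  have hft : f t = 0 := by
    rcases le_or_gt 0 t with h | h
    · exact hright t ⟨h, ht.2⟩
    · have := hleft (-t) ⟨by linarith, by linarith [ht.1]⟩
      rwa [neg_neg] at this
  apply hj1inj
  have hz : j1 (γ1 t) - j1 (γ2 t) = 0 := by
    have : ‖j1 (γ1 t) - j1 (γ2 t)‖ = 0 := hft
    rwa [norm_eq_zero] at this
  exact sub_eq_zero.mp hz
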